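/- arXiv:1002.0045 — 2 statements merged into one kernel-verified Lean document; each statement's English description precedes it below -/
import Mathlib

section
/- If H is a graph with maximum degree Δ and d_1,...,d_t are nonnegative integers satisfying d_1+...+d_t = Δ - t + 1, then there is a partition V(H) = V_1 ∪ ... ∪ V_t such that for each 1 ≤ i ≤ t, the subgraph of H induced on V_i has maximum degree at most d_i. -/
/-!
Among all colourings `P : V → Fin t` choose one minimising `∑ᵢ (e(Vᵢ) - dᵢ |Vᵢ|)`.
If some `v` had more than `d_{P v}` neighbours of its own colour, then since
`deg v ≤ Δ < ∑ᵢ (dᵢ + 1)` some colour `j` is used by at most `dⱼ` neighbours of `v`,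
and recolouring `v` with `j` lowers the potential by at least one.
-/

open Finset

theorem Fintype.sum_sum_eq_row_add_col {V M : Type*} [Fintype V] [DecidableEq V]
    [AddCommMonoid M] (f : V → V → M) (v : V) (hdiag : f v v = 0)
    (hoff : ∀ u w, u ≠ v → w ≠ v → f u w = 0) :
    ∑ u, ∑ w, f u w = ∑ w, f v w + ∑ u, f u v := by
  rw [← add_sum_erase _ _ (mem_univ v), ← sum_erase univ (f := fun u => f u v) hdiag]
  refine congrArg _ (Finset.sum_congr rfl fun u hu => ?_)
  exact Finset.sum_eq_single v (fun w _ hw => hoff u w (ne_of_mem_erase hu) hw) (by simp)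

namespace SimpleGraph

variable {V ι : Type*} [Fintype V] [DecidableEq ι] (G : SimpleGraph V) [DecidableRel G.Adj]

def colorDegree (P : V → ι) (v : V) (c : ι) : ℕ := #{u ∈ G.neighborFinset v | P u = c}

variable {G}

theorem colorDegree_eq_sum {R : Type*} [CommSemiring R] (P : V → ι) (v : V) (c : ι) :
    (G.colorDegree P v c : R) = ∑ w, if G.Adj v w ∧ P w = c then 1 else 0 := by
  rw [colorDegree, neighborFinset_eq_filter, filter_filter, natCast_card_filter]

theorem sum_colorDegree [Fintype ι] (P : V → ι) (v : V) :
    ∑ c, G.colorDegree P v c = G.degree v :=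
  (card_eq_sum_card_fiberwise fun _ _ => mem_univ _).symm

theorem exists_colorDegree_le [Fintype ι] (P : V → ι) {v : V} {d : ι → ℕ}
    (h : G.degree v < ∑ c, (d c + 1)) : ∃ c, G.colorDegree P v c ≤ d c := by
  rw [← sum_colorDegree P v] at h
  obtain ⟨c, -, hc⟩ := exists_lt_of_sum_lt h
  exact ⟨c, Nat.lt_succ_iff.1 hc⟩

variable [DecidableEq V]

theorem colorDegree_update_self (P : V → ι) (v : V) (j c : ι) :
    G.colorDegree (Function.update P v j) v c = G.colorDegree P v c := by
  refine congrArg card (filter_congr fun w hw => ?_)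
  rw [Function.update_of_ne (G.ne_of_adj ((G.mem_neighborFinset v w).1 hw)).symm]

theorem sum_colorDegree_update (P : V → ι) (v : V) (j : ι) :
    ∑ u, (G.colorDegree (Function.update P v j) u (Function.update P v j u) : ℤ) =
      ∑ u, (G.colorDegree P u (P u) : ℤ) +
        2 * (G.colorDegree P v j - G.colorDegree P v (P v)) := by
  set P' := Function.update P v j
  let k : (V → ι) → V → V → ℤ := fun Q u w => if G.Adj u w ∧ Q w = Q u then 1 else 0
  have hsum (Q : V → ι) : ∑ u, (G.colorDegree Q u (Q u) : ℤ) = ∑ u, ∑ w, k Q u w :=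
    sum_congr rfl fun u _ => colorDegree_eq_sum Q u (Q u)
  have hrow : ∑ w, (k P' v w - k P v w) = G.colorDegree P v j - G.colorDegree P v (P v) := by
    rw [sum_sub_distrib, ← colorDegree_eq_sum, ← colorDegree_eq_sum, colorDegree_update_self]
    simp only [P', Function.update_self]
  have hcol : ∑ u, (k P' u v - k P u v) = ∑ w, (k P' v w - k P v w) := by
    simp only [k, G.adj_comm _ v, eq_comm]
  have hcross := Fintype.sum_sum_eq_row_add_col (fun u w => k P' u w - k P u w) v
    (by simp [k]) fun u w hu hw => by
      simp [k, P', Function.update_of_ne hu, Function.update_of_ne hw]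
  rw [hsum, hsum, ← sub_eq_iff_eq_add', ← sum_sub_distrib]
  simp only [← sum_sub_distrib]
  rw [hcross, hcol, hrow]
  ring

variable (G) in
/-- Twice the potential `∑ᵢ (e(Vᵢ) - dᵢ |Vᵢ|)` of the classes `Vᵢ = P⁻¹' {i}`. -/
def lovaszCost (d : ι → ℕ) (P : V → ι) : ℤ :=
  ∑ u, ((G.colorDegree P u (P u) : ℤ) - 2 * d (P u))

theorem lovaszCost_update (d : ι → ℕ) (P : V → ι) (v : V) (j : ι) :
    G.lovaszCost d (Function.update P v j) = G.lovaszCost d P +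
      2 * ((G.colorDegree P v j - d j) - (G.colorDegree P v (P v) - d (P v)) : ℤ) := by
  have hweight :
      ∑ u, (d (Function.update P v j u) : ℤ) = ∑ u, (d (P u) : ℤ) + (d j - d (P v)) := by
    rw [← sub_eq_iff_eq_add', ← sum_sub_distrib, Fintype.sum_eq_single v fun u hu => by
      rw [Function.update_of_ne hu, sub_self], Function.update_self]
  simp only [lovaszCost, sum_sub_distrib, ← mul_sum, sum_colorDegree_update, hweight]
  ring

theorem lovaszCost_update_lt {d : ι → ℕ} {P : V → ι} {v : V} {j : ι}
    (hv : d (P v) < G.colorDegree P v (P v)) (hj : G.colorDegree P v j ≤ d j) :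
    G.lovaszCost d (Function.update P v j) < G.lovaszCost d P := by
  rw [lovaszCost_update]
  omega

omit [DecidableEq V] in
theorem exists_forall_colorDegree_le [Fintype ι] (d : ι → ℕ)
    (h : ∀ v, G.degree v < ∑ c, (d c + 1)) :
    ∃ P : V → ι, ∀ v, G.colorDegree P v (P v) ≤ d (P v) := by
  classical
  have : Nonempty (V → ι) := by
    rcases isEmpty_or_nonempty V with _ | ⟨⟨v⟩⟩
    · infer_instance
    · obtain ⟨c, -, -⟩ := exists_ne_zero_of_sum_ne_zero (h v).ne_bot
      exact ⟨fun _ => c⟩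
  obtain ⟨P, hP⟩ := Finite.exists_min (G.lovaszCost d)
  refine ⟨P, fun v => ?_⟩
  by_contra! hv
  obtain ⟨j, hj⟩ := exists_colorDegree_le P (h v)
  exact (hP _).not_gt (lovaszCost_update_lt hv hj)

end SimpleGraph

theorem lovasz_degree_partition_general {V : Type} [Fintype V]
    (H : SimpleGraph V) [DecidableRel H.Adj] (Δ t : ℕ)
    (hΔ : ∀ v, H.degree v ≤ Δ)
    (d : Fin t → ℕ) (hd : (∑ i, d i) + t = Δ + 1) :
    ∃ P : V → Fin t, ∀ v : V,
      ((H.neighborFinset v).filter (fun u => P u = P v)).card ≤ d (P v) := by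
  refine H.exists_forall_colorDegree_le d fun v => ?_
  rw [sum_add_distrib, sum_const, card_univ, Fintype.card_fin, smul_eq_mul, mul_one, hd]
  exact Nat.lt_succ_of_le (hΔ v)

/-- Lemma of Lovász: if `H` has maximum degree `Δ` and `d₁,…,d_t` are nonnegative
integers with `d₁+⋯+d_t = Δ - t + 1`, there is a partition `V(H) = V₁ ∪ ⋯ ∪ V_t`
such that the induced subgraph on `V_i` has maximum degree at most `d_i`. -/
theorem lovasz_degree_partition {V : Type} [Fintype V] [DecidableEq V]
    (H : SimpleGraph V) [DecidableRel H.Adj] (Δ t : ℕ)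
    (hΔ : ∀ v, H.degree v ≤ Δ)
    (d : Fin t → ℕ) (hd : (∑ i, d i) + t = Δ + 1) :
    ∃ P : V → Fin t, ∀ v : V,
      ((H.neighborFinset v).filter (fun u => P u = P v)).card ≤ d (P v) :=
  lovasz_degree_partition_general H Δ t hΔ d hd
end

section
/- Let G be a (1/2,λ)-pseudo-random graph, and let P and W be disjoint vertex subsets such that every vertex of P has fewer than (1/2 - δ)|W| neighbors in W. Then |P| < λ²/(δ²|W|). -/
/-!
Counting the edges between `P` and `W` vertex by vertex shows that their density is below
`1/2 - δ`. Pseudo-randomness then forces `δ < λ / √(|P||W|)`, which after squaring is the claim.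
-/

open Finset

namespace Rel

variable {α β : Type*} (r : α → β → Prop) [∀ a, DecidablePred (r a)]

theorem card_interedges_eq_sum (s : Finset α) (t : Finset β) :
    #(interedges r s t) = ∑ a ∈ s, #{b ∈ t | r a b} := by
  simp only [interedges, card_filter, sum_product]

end Rel

namespace SimpleGraph

variable {V : Type*} (G : SimpleGraph V) [DecidableRel G.Adj]

theorem edgeDensity_lt_of_forall_card_neighbors_lt {s t : Finset V} {c : ℝ}
    (hs : s.Nonempty) (ht : t.Nonempty) (h : ∀ v ∈ s, (#{w ∈ t | G.Adj v w} : ℝ) < c * #t) :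
    (G.edgeDensity s t : ℝ) < c := by
  have hst : (0 : ℝ) < #s * #t := by
    have := hs.card_pos; have := ht.card_pos; positivity
  have hcount : (#(G.interedges s t) : ℝ) < c * (#s * #t) :=
    calc (#(G.interedges s t) : ℝ) = ∑ v ∈ s, (#{w ∈ t | G.Adj v w} : ℝ) := by
          rw [interedges, Rel.card_interedges_eq_sum]; push_cast; rfl
      _ < ∑ _v ∈ s, c * #t := sum_lt_sum_of_nonempty hs h
      _ = c * (#s * #t) := by rw [sum_const, nsmul_eq_mul]; ring
  rw [edgeDensity_def]
  push_cast
  rwa [div_lt_iff₀ hst]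

end SimpleGraph

theorem lt_sq_div_sq_of_lt_div_sqrt {δ lam x : ℝ} (hδ : 0 < δ) (hx : 0 < x)
    (h : δ < lam / √x) : x < lam ^ 2 / δ ^ 2 := by
  rw [lt_div_iff₀ (Real.sqrt_pos.2 hx)] at h
  have hsq : (δ * √x) ^ 2 < lam ^ 2 := pow_lt_pow_left₀ h (by positivity) two_ne_zero
  rw [mul_pow, Real.sq_sqrt hx.le] at hsq
  rw [lt_div_iff₀ (by positivity)]
  linarith

theorem pseudorandom_few_low_degree_general {V : Type}
    (G : SimpleGraph V) [DecidableRel G.Adj] (lam δ : ℝ) (hδ : 0 < δ)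
    (hpr : ∀ A B : Finset V, Disjoint A B → A.Nonempty → B.Nonempty →
      |(G.edgeDensity A B : ℝ) - 1 / 2| ≤ lam / Real.sqrt ((A.card : ℝ) * B.card))
    (P W : Finset V) (hPW : Disjoint P W) (hP : P.Nonempty) (hW : W.Nonempty)
    (hdeg : ∀ v ∈ P, ((W.filter (G.Adj v)).card : ℝ) < (1 / 2 - δ) * W.card) :
    (P.card : ℝ) < lam ^ 2 / (δ ^ 2 * W.card) := by
  have hdens : (G.edgeDensity P W : ℝ) < 1 / 2 - δ :=
    G.edgeDensity_lt_of_forall_card_neighbors_lt hP hW hdeg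
  have hgap : δ < lam / √((#P : ℝ) * #W) :=
    (lt_abs.2 (Or.inr (by linarith))).trans_le (hpr P W hPW hP hW)
  have hPW_pos : (0 : ℝ) < #P * #W := by
    have := hP.card_pos; have := hW.card_pos; positivity
  have hW_pos : (0 : ℝ) < #W := by exact_mod_cast hW.card_pos
  rw [← div_div, lt_div_iff₀ hW_pos]
  exact lt_sq_div_sq_of_lt_div_sqrt hδ hPW_pos hgap

/-- In a (1/2,λ)-pseudo-random graph, if every vertex of P has fewer than
(1/2 - δ)|W| neighbors in the disjoint set W, then |P| < λ²/(δ²|W|). -/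
theorem pseudorandom_few_low_degree {V : Type} [Fintype V] [DecidableEq V]
    (G : SimpleGraph V) [DecidableRel G.Adj] (lam δ : ℝ) (hδ : 0 < δ)
    (hpr : ∀ A B : Finset V, Disjoint A B → A.Nonempty → B.Nonempty →
      |(G.edgeDensity A B : ℝ) - 1 / 2| ≤ lam / Real.sqrt ((A.card : ℝ) * B.card))
    (P W : Finset V) (hPW : Disjoint P W) (hP : P.Nonempty) (hW : W.Nonempty)
    (hdeg : ∀ v ∈ P, ((W.filter (G.Adj v)).card : ℝ) < (1 / 2 - δ) * W.card) :
    (P.card : ℝ) < lam ^ 2 / (δ ^ 2 * W.card) :=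
  pseudorandom_few_low_degree_general G lam δ hδ hpr P W hPW hP hW hdeg
end
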